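/- arXiv:2110.04554 — 10 statements merged into one kernel-verified Lean document; each statement's English description precedes it below -/
import Mathlib

section
/- Let X be a finite set with weight m : X → (0,∞), and let H be a selfadjoint operator on ℓ²(X,m). If H is diagonally dominant (i.e., H x(x) ≥ Σ_{y≠x} |H y(x)| for all x ∈ X), then for all t ≥ 0 and all f : X → ℝ, ‖e^{-tH} f‖_∞ ≤ ‖f‖_∞. -/
/-!
Let `c` be the trace of `H`. Diagonal dominance forces `0 ≤ H x x ≤ c`, and then every row of
`c • 1 - H` has absolute sum `c - H x x + ∑_{y ≠ x} |H x y| ≤ c`, so `‖c • 1 - H‖ ≤ c` in the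
row-sum norm, which is the operator norm for `‖·‖_∞`. Since `c • 1` is central,
`e^{-tH} = e^{-tc} e^{t (c • 1 - H)}`, whose norm is at most `e^{-tc} e^{tc} = 1`.
-/

open NormedSpace Finset

attribute [local instance] Matrix.linftyOpSeminormedAddCommGroup Matrix.linftyOpNormedRing
  Matrix.linftyOpNormedAlgebra

namespace NormedSpace

variable {𝔸 : Type*} [NormedRing 𝔸] (h1 : ‖(1 : 𝔸)‖ ≤ 1)
include h1

theorem norm_pow_le_of_norm_one_le_one (x : 𝔸) (n : ℕ) : ‖x ^ n‖ ≤ ‖x‖ ^ n := by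
  cases n with
  | zero => simpa using h1
  | succ n => exact norm_pow_le' x n.succ_pos

variable [NormedAlgebra ℝ 𝔸]

theorem norm_exp_le_exp_norm (x : 𝔸) : ‖exp x‖ ≤ Real.exp ‖x‖ := by
  rw [Real.exp_eq_exp_ℝ, exp_eq_tsum ℝ, exp_eq_tsum ℝ]
  refine (norm_tsum_le_tsum_norm (norm_expSeries_summable' x)).trans ?_
  refine Summable.tsum_le_tsum (fun n => ?_) (norm_expSeries_summable' x) (expSeries_summable' ‖x‖)
  rw [norm_smul, norm_inv, Real.norm_natCast, smul_eq_mul]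
  exact mul_le_mul_of_nonneg_left (norm_pow_le_of_norm_one_le_one h1 x n) (by positivity)

theorem norm_exp_neg_smul_le_one [CompleteSpace 𝔸] {a : 𝔸} {c t : ℝ}
    (ha : ‖c • (1 : 𝔸) - a‖ ≤ c) (ht : 0 ≤ t) : ‖exp (-(t • a))‖ ≤ 1 := by
  have hsplit : -(t • a) = algebraMap ℝ 𝔸 (-(t * c)) + t • (c • 1 - a) := by
    rw [Algebra.algebraMap_eq_smul_one]; module
  have hball : ∀ y : 𝔸, y ∈ Metric.eball (0 : 𝔸) (expSeries ℝ 𝔸).radius := by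
    simp [expSeries_radius_eq_top]
  rw [hsplit, exp_add_of_commute_of_mem_ball (𝕂 := ℝ) (Algebra.commutes _ _) (hball _) (hball _),
    ← algebraMap_exp_comm, Algebra.algebraMap_eq_smul_one, smul_mul_assoc, one_mul, norm_smul,
    ← Real.exp_eq_exp_ℝ, Real.norm_of_nonneg (Real.exp_pos _).le]
  calc Real.exp (-(t * c)) * ‖exp (t • (c • 1 - a))‖
      ≤ Real.exp (-(t * c)) * Real.exp (t * c) := by
        gcongr
        refine (norm_exp_le_exp_norm h1 _).trans (Real.exp_le_exp.2 ?_)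
        rw [norm_smul, Real.norm_of_nonneg ht]
        exact mul_le_mul_of_nonneg_left ha ht
    _ = 1 := by rw [← Real.exp_add, neg_add_cancel, Real.exp_zero]

end NormedSpace

namespace Matrix

theorem linfty_opNorm_le_of_forall_sum_le {m n α : Type*} [Fintype m] [Fintype n]
    [SeminormedAddCommGroup α] {A : Matrix m n α} {c : ℝ} (hc : 0 ≤ c)
    (h : ∀ i, ∑ j, ‖A i j‖ ≤ c) : ‖A‖ ≤ c := by
  lift c to NNReal using hc
  rw [linfty_opNorm_def, NNReal.coe_le_coe]
  exact Finset.sup_le fun i _ => by rw [← NNReal.coe_le_coe]; push_cast; exact h i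

variable {X : Type*} [Fintype X] [DecidableEq X]

theorem linfty_opNorm_one_le : ‖(1 : Matrix X X ℝ)‖ ≤ 1 := by
  rw [← diagonal_one, linfty_opNorm_diagonal]; exact (pi_norm_const_le 1).trans norm_one.le

def IsDiagDominant (H : Matrix X X ℝ) : Prop :=
  ∀ x, ∑ y ∈ univ.erase x, |H x y| ≤ H x x

namespace IsDiagDominant

variable {H : Matrix X X ℝ} (hH : H.IsDiagDominant)
include hH

theorem diag_nonneg (x : X) : 0 ≤ H x x :=
  (sum_nonneg fun _ _ => abs_nonneg _).trans (hH x)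

theorem diag_le_trace (x : X) : H x x ≤ H.trace :=
  single_le_sum (f := fun y => H y y) (fun y _ => hH.diag_nonneg y) (mem_univ x)

theorem norm_smul_one_sub_le {c : ℝ} (hc₀ : 0 ≤ c) (hc : ∀ x, H x x ≤ c) :
    ‖c • (1 : Matrix X X ℝ) - H‖ ≤ c := by
  refine linfty_opNorm_le_of_forall_sum_le hc₀ fun x => ?_
  have hoff : ∀ y ∈ univ.erase x, ‖(c • 1 - H) x y‖ = |H x y| := fun y hy => by
    simp [one_apply_ne' (ne_of_mem_erase hy)]
  have hdiag : ‖(c • 1 - H) x x‖ = c - H x x := by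
    simp [abs_of_nonneg (sub_nonneg.2 (hc x))]
  rw [← add_sum_erase _ _ (mem_univ x), hdiag, sum_congr rfl hoff]
  linarith [hH x]

theorem norm_trace_smul_one_sub_le : ‖H.trace • (1 : Matrix X X ℝ) - H‖ ≤ H.trace :=
  hH.norm_smul_one_sub_le (sum_nonneg fun x _ => hH.diag_nonneg x) hH.diag_le_trace

end IsDiagDominant

end Matrix

theorem stmt_0_general {X : Type*} [Fintype X] [DecidableEq X]
    (H : Matrix X X ℝ)
    (hdd : ∀ x, ∑ y ∈ Finset.univ.erase x, |H x y| ≤ H x x)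
    (t : ℝ) (ht : 0 ≤ t) (f : X → ℝ) :
    ‖(NormedSpace.exp (-(t • H))).mulVec f‖ ≤ ‖f‖ :=
  calc ‖(exp (-(t • H))).mulVec f‖ ≤ ‖exp (-(t • H))‖ * ‖f‖ := Matrix.linfty_opNorm_mulVec _ _
    _ ≤ 1 * ‖f‖ := by
      gcongr
      exact norm_exp_neg_smul_le_one Matrix.linfty_opNorm_one_le
        (Matrix.IsDiagDominant.norm_trace_smul_one_sub_le hdd) ht
    _ = ‖f‖ := one_mul _

/-- If a selfadjoint operator `H` on `ℓ²(X,m)` is diagonally dominant,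
then the semigroup `e^{-tH}` is a contraction in the sup norm. -/
theorem stmt_0 {X : Type*} [Fintype X] [DecidableEq X] [Nonempty X]
    (m : X → ℝ) (hm : ∀ x, 0 < m x)
    (H : Matrix X X ℝ)
    (hsa : ∀ x y, m x * H x y = m y * H y x)
    (hdd : ∀ x, ∑ y ∈ Finset.univ.erase x, |H x y| ≤ H x x)
    (t : ℝ) (ht : 0 ≤ t) (f : X → ℝ) :
    ‖(NormedSpace.exp (-(t • H))).mulVec f‖ ≤ ‖f‖ :=
  stmt_0_general H hdd t ht f
end

section
/- Let X be a finite set with weight m : X → (0,∞), and let H be a selfadjoint operator on ℓ²(X,m). If ‖e^{-tH} f‖_∞ ≤ ‖f‖_∞ for all t ≥ 0 and all f : X → ℝ, then H is diagonally dominant, i.e., H x(x) ≥ Σ_{y≠x} |H y(x)| for all x ∈ X. -/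
/-!
If `f` attains its sup norm at `x`, contractivity of `e^{-tH}` in `‖·‖_∞` makes `t = 0` a
maximum of `t ↦ (e^{-tH} f)(x)` on `[0, ∞)`, so the right derivative `-(H f)(x)` there is
nonpositive. For `f = 1` at `x` and `f y = -sign (H x y)` elsewhere,
`(H f)(x) = H x x - ∑_{y ≠ x} |H x y|`.
-/

open NormedSpace Matrix

theorem HasDerivWithinAt.nonpos_of_isMaxOn_Ici {g : ℝ → ℝ} {g' a : ℝ}
    (hg : HasDerivWithinAt g g' (Set.Ici a) a) (hmax : IsMaxOn g (Set.Ici a) a) : g' ≤ 0 := by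
  have hone : (1 : ℝ) ∈ posTangentConeAt (Set.Ici a) a :=
    mem_posTangentConeAt_of_segment_subset <| by
      rw [segment_eq_Icc (by linarith)]
      exact Set.Icc_subset_Ici_self
  simpa using hmax.localize.hasFDerivWithinAt_nonpos hg hone

section

-- `exp` is defined topologically, so it does not depend on this choice of norm; any
-- Banach-algebra norm serves to differentiate it.
attribute [local instance] Matrix.linftyOpNormedAddCommGroup Matrix.linftyOpNormedRing
  Matrix.linftyOpNormedAlgebra

variable {X : Type*} [Fintype X] [DecidableEq X]

theorem Matrix.hasDerivAt_exp_smul_mulVec_apply (A : Matrix X X ℝ) (f : X → ℝ) (x : X) :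
    HasDerivAt (fun t : ℝ => (exp (t • A) *ᵥ f) x) ((A *ᵥ f) x) 0 := by
  let L : Matrix X X ℝ →L[ℝ] ℝ := LinearMap.toContinuousLinearMap
    (LinearMap.proj x ∘ₗ LinearMap.applyₗ f ∘ₗ Matrix.toLin'.toLinearMap)
  have hL : ∀ M, L M = (M *ᵥ f) x := fun _ => rfl
  have h := L.hasFDerivAt.comp_hasDerivAt (0 : ℝ) (hasDerivAt_exp_smul_const A (0 : ℝ))
  simp only [Function.comp_def, hL, zero_smul, exp_zero, one_mul] at h
  exact h

theorem Matrix.mulVec_apply_nonneg_of_norm_exp_mulVec_le {H : Matrix X X ℝ} {f : X → ℝ}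
    (hcontr : ∀ t : ℝ, 0 ≤ t → ‖exp (-(t • H)) *ᵥ f‖ ≤ ‖f‖) {x : X} (hfx : ‖f‖ ≤ f x) :
    0 ≤ (H *ᵥ f) x := by
  have hmax : IsMaxOn (fun t : ℝ => (exp (t • -H) *ᵥ f) x) (Set.Ici 0) 0 := fun t ht => by
    calc (exp (t • -H) *ᵥ f) x ≤ ‖exp (t • -H) *ᵥ f‖ :=
          (le_abs_self _).trans (norm_le_pi_norm (exp (t • -H) *ᵥ f) x)
      _ ≤ ‖f‖ := by simpa using hcontr t ht
      _ ≤ _ := by simpa using hfx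
  have hderiv := ((-H).hasDerivAt_exp_smul_mulVec_apply f x).hasDerivWithinAt (s := Set.Ici 0)
  simpa [neg_mulVec] using hderiv.nonpos_of_isMaxOn_Ici hmax

noncomputable def Matrix.rowSignVector (A : Matrix X X ℝ) (x : X) : X → ℝ :=
  fun y => if y = x then 1 else -SignType.sign (A x y)

theorem Matrix.norm_rowSignVector_le (A : Matrix X X ℝ) (x : X) : ‖A.rowSignVector x‖ ≤ 1 := by
  refine (pi_norm_le_iff_of_nonneg zero_le_one).2 fun y => ?_
  by_cases hy : y = x
  · simp [rowSignVector, hy]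
  · simp only [rowSignVector, hy, if_false, norm_neg]
    cases SignType.sign (A x y) <;> simp

theorem Matrix.mulVec_rowSignVector_apply (A : Matrix X X ℝ) (x : X) :
    (A *ᵥ A.rowSignVector x) x = A x x - ∑ y ∈ Finset.univ.erase x, |A x y| := by
  rw [mulVec, dotProduct, ← Finset.add_sum_erase _ _ (Finset.mem_univ x), sub_eq_add_neg,
    ← Finset.sum_neg_distrib]
  congr 1
  · simp [rowSignVector]
  · refine Finset.sum_congr rfl fun y hy => ?_
    simp [rowSignVector, Finset.ne_of_mem_erase hy, self_mul_sign]

end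

theorem stmt_1_general {X : Type*} [Fintype X] [DecidableEq X]
    (H : Matrix X X ℝ)
    (hcontr : ∀ t : ℝ, 0 ≤ t → ∀ f : X → ℝ,
      ‖(NormedSpace.exp (-(t • H))).mulVec f‖ ≤ ‖f‖) :
    ∀ x, ∑ y ∈ Finset.univ.erase x, |H x y| ≤ H x x := by
  intro x
  have hattained : ‖H.rowSignVector x‖ ≤ H.rowSignVector x x := by
    simpa [rowSignVector] using H.norm_rowSignVector_le x
  have hnonneg := mulVec_apply_nonneg_of_norm_exp_mulVec_le (fun t ht => hcontr t ht _) hattained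
  rw [mulVec_rowSignVector_apply] at hnonneg
  linarith

/-- If the semigroup `e^{-tH}` of a selfadjoint operator `H` on `ℓ²(X,m)`
is a contraction in the sup norm, then `H` is diagonally dominant. -/
theorem stmt_1 {X : Type*} [Fintype X] [DecidableEq X] [Nonempty X]
    (m : X → ℝ) (hm : ∀ x, 0 < m x)
    (H : Matrix X X ℝ)
    (hsa : ∀ x y, m x * H x y = m y * H y x)
    (hcontr : ∀ t : ℝ, 0 ≤ t → ∀ f : X → ℝ,
      ‖(NormedSpace.exp (-(t • H))).mulVec f‖ ≤ ‖f‖) :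
    ∀ x, ∑ y ∈ Finset.univ.erase x, |H x y| ≤ H x x :=
  stmt_1_general H hcontr
end

section
/- Let X be a finite set with weight m : X → (0,∞), and let H be a selfadjoint operator on ℓ²(X,m). If H is diagonally dominant, then for every p ∈ [1,∞) and every f : X → ℝ, the function t ↦ ‖e^{-tH} f‖_p is nonincreasing, where ‖f‖_p^p := Σ_x m(x)|f(x)|^p. -/
/-!
For `p > 1` and `u = e^{-tH} f`, the derivative of `∑ₓ m(x) |u(x)|^p` is
`-p ∑ₓ m(x) |u(x)|^(p-2) u(x) (Hu)(x)`. Young's inequality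
`p |u(x)|^(p-1) |u(y)| ≤ (p-1) |u(x)|^p + |u(y)|^p` and the symmetry `m(x)|H x y| = m(y)|H y x|`
bound the off-diagonal part of this sum by `∑ₓ m(x) |u(x)|^p ∑_{y ≠ x} |H x y|`, which diagonal
dominance absorbs into the diagonal part, so the derivative is nonpositive. The case `p = 1`
follows by letting `p ↓ 1`.
-/

open Finset Matrix

lemma mul_rpow_sub_one_mul_le {a b p : ℝ} (ha : 0 ≤ a) (hb : 0 ≤ b) (hp : 1 < p) :
    p * (a ^ (p - 1) * b) ≤ (p - 1) * a ^ p + b ^ p := by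
  have hp0 : 0 < p := by linarith
  have h := Real.geom_mean_le_arith_mean2_weighted (w₁ := (p - 1) / p) (w₂ := 1 / p)
    (by bound) (by positivity) (Real.rpow_nonneg ha p) (Real.rpow_nonneg hb p) (by field_simp; ring)
  rw [← Real.rpow_mul ha, ← Real.rpow_mul hb, mul_div_cancel₀ _ hp0.ne',
    mul_one_div_cancel hp0.ne', Real.rpow_one] at h
  calc p * (a ^ (p - 1) * b) ≤ p * ((p - 1) / p * a ^ p + 1 / p * b ^ p) := by gcongr
    _ = (p - 1) * a ^ p + b ^ p := by field_simp

lemma abs_rpow_sub_two_mul_self_mul_self {p : ℝ} (hp : p ≠ 0) (s : ℝ) :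
    |s| ^ (p - 2) * s * s = |s| ^ p := by
  rw [mul_assoc, ← abs_mul_abs_self, ← sq, ← Real.rpow_two,
    ← Real.rpow_add' (abs_nonneg s) (by simpa using hp)]
  ring_nf

lemma abs_abs_rpow_sub_two_mul_self {p : ℝ} (hp : p ≠ 1) (s : ℝ) :
    |(|s| ^ (p - 2) * s)| = |s| ^ (p - 1) := by
  rw [abs_mul, abs_of_nonneg (Real.rpow_nonneg (abs_nonneg s) _),
    ← Real.rpow_add_one' (abs_nonneg s) (by contrapose! hp; linarith)]
  ring_nf

section DiagonallyDominant

variable {X : Type*} [Fintype X] [DecidableEq X]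

lemma Finset.sum_erase_univ_comm {M : Type*} [AddCommMonoid M] (f : X → X → M) :
    ∑ x, ∑ y ∈ univ.erase x, f x y = ∑ x, ∑ y ∈ univ.erase x, f y x :=
  Finset.sum_comm' (by simp [ne_comm])

lemma sum_erase_mul_rpow_sub_one_mul_le {w : X → X → ℝ} (hw : ∀ x y, 0 ≤ w x y)
    (hw_symm : ∀ x y, w x y = w y x) {a : X → ℝ} (ha : ∀ x, 0 ≤ a x) {p : ℝ} (hp : 1 < p) :
    ∑ x, ∑ y ∈ univ.erase x, w x y * (a x ^ (p - 1) * a y) ≤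
      ∑ x, ∑ y ∈ univ.erase x, w x y * a x ^ p := by
  have hswap : ∑ x, ∑ y ∈ univ.erase x, w x y * a y ^ p =
      ∑ x, ∑ y ∈ univ.erase x, w x y * a x ^ p := by
    rw [sum_erase_univ_comm]
    exact sum_congr rfl fun x _ => sum_congr rfl fun y _ => by rw [hw_symm]
  refine le_of_mul_le_mul_left ?_ (by linarith : 0 < p)
  calc p * ∑ x, ∑ y ∈ univ.erase x, w x y * (a x ^ (p - 1) * a y)
      = ∑ x, ∑ y ∈ univ.erase x, w x y * (p * (a x ^ (p - 1) * a y)) := by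
        simp only [mul_sum, mul_left_comm]
    _ ≤ ∑ x, ∑ y ∈ univ.erase x, w x y * ((p - 1) * a x ^ p + a y ^ p) := by
        gcongr with x _ y _
        exacts [hw x y, mul_rpow_sub_one_mul_le (ha x) (ha y) hp]
    _ = (p - 1) * ∑ x, ∑ y ∈ univ.erase x, w x y * a x ^ p +
          ∑ x, ∑ y ∈ univ.erase x, w x y * a y ^ p := by
        simp only [mul_add, sum_add_distrib, mul_sum, mul_left_comm]
    _ = p * ∑ x, ∑ y ∈ univ.erase x, w x y * a x ^ p := by rw [hswap]; ring

variable {m : X → ℝ} {H : Matrix X X ℝ} {p : ℝ}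

lemma sub_sum_erase_le_mul_abs_rpow_mulVec (u : X → ℝ) (x : X) (hm : 0 ≤ m x) (hp : 1 < p) :
    m x * H x x * |u x| ^ p - ∑ y ∈ univ.erase x, m x * |H x y| * (|u x| ^ (p - 1) * |u y|) ≤
      m x * (|u x| ^ (p - 2) * u x) * (H *ᵥ u) x := by
  have hoff : |m x * (|u x| ^ (p - 2) * u x) * ∑ y ∈ univ.erase x, H x y * u y| ≤
      ∑ y ∈ univ.erase x, m x * |H x y| * (|u x| ^ (p - 1) * |u y|) := by
    rw [abs_mul, abs_mul, abs_of_nonneg hm, abs_abs_rpow_sub_two_mul_self hp.ne']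
    refine (mul_le_mul_of_nonneg_left (abs_sum_le_sum_abs _ _) (by positivity)).trans_eq ?_
    simp only [mul_sum, abs_mul]
    exact sum_congr rfl fun y _ => by ring
  rw [mulVec, dotProduct, ← add_sum_erase _ _ (mem_univ x), mul_add,
    show m x * (|u x| ^ (p - 2) * u x) * (H x x * u x) = m x * H x x * (|u x| ^ (p - 2) * u x * u x)
      by ring, abs_rpow_sub_two_mul_self_mul_self (by linarith)]
  linarith [neg_abs_le (m x * (|u x| ^ (p - 2) * u x) * ∑ y ∈ univ.erase x, H x y * u y)]

lemma sum_mul_abs_rpow_sub_two_mul_mulVec_nonneg (hm : ∀ x, 0 ≤ m x)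
    (hsa : ∀ x y, m x * H x y = m y * H y x) (hdd : ∀ x, ∑ y ∈ univ.erase x, |H x y| ≤ H x x)
    (hp : 1 < p) (u : X → ℝ) :
    0 ≤ ∑ x, m x * (|u x| ^ (p - 2) * u x) * (H *ᵥ u) x := by
  have hoff := sum_erase_mul_rpow_sub_one_mul_le (w := fun x y => m x * |H x y|)
    (fun x y => mul_nonneg (hm x) (abs_nonneg _))
    (fun x y => by
      rw [← abs_of_nonneg (hm x), ← abs_mul, hsa, abs_mul, abs_of_nonneg (hm y)])
    (fun x => abs_nonneg (u x)) hp
  have hdiag : ∑ x, ∑ y ∈ univ.erase x, m x * |H x y| * |u x| ^ p ≤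
      ∑ x, m x * H x x * |u x| ^ p := by
    refine sum_le_sum fun x _ => ?_
    rw [← sum_mul, ← mul_sum]
    gcongr
    exacts [hm x, hdd x]
  calc 0 ≤ ∑ x, m x * H x x * |u x| ^ p -
        ∑ x, ∑ y ∈ univ.erase x, m x * |H x y| * (|u x| ^ (p - 1) * |u y|) := by
        simp only [mul_assoc] at hoff hdiag ⊢
        linarith
    _ ≤ _ := by
      rw [← sum_sub_distrib]
      exact sum_le_sum fun x _ => sub_sum_erase_le_mul_abs_rpow_mulVec u x (hm x) hp

section Semigroup

-- `NormedSpace.exp` only needs the topology of `Matrix X X ℝ`; differentiating it needs some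
-- Banach algebra norm, and every norm induces the product topology.
attribute [local instance] Matrix.linftyOpNormedRing Matrix.linftyOpNormedAlgebra

lemma hasDerivAt_exp_neg_smul_mulVec (H : Matrix X X ℝ) (f : X → ℝ) (t : ℝ) :
    HasDerivAt (fun t : ℝ => NormedSpace.exp (-(t • H)) *ᵥ f)
      (-(H *ᵥ (NormedSpace.exp (-(t • H)) *ᵥ f))) t := by
  let L : Matrix X X ℝ →L[ℝ] X → ℝ :=
    LinearMap.toContinuousLinearMap (LinearMap.applyₗ f ∘ₗ toLin'.toLinearMap)
  have h := L.hasFDerivAt.comp_hasDerivAt t (hasDerivAt_exp_smul_const' (-H) t)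
  simp only [smul_neg] at h
  exact h.congr_deriv (by
    rw [mulVec_mulVec, ← neg_mulVec, ← neg_mul]; rfl)

end Semigroup

lemma antitone_sum_mul_abs_exp_mulVec_rpow_of_one_lt (hm : ∀ x, 0 ≤ m x)
    (hsa : ∀ x y, m x * H x y = m y * H y x) (hdd : ∀ x, ∑ y ∈ univ.erase x, |H x y| ≤ H x x)
    (hp : 1 < p) (f : X → ℝ) :
    Antitone fun t : ℝ => ∑ x, m x * |(NormedSpace.exp (-(t • H)) *ᵥ f) x| ^ p := by
  set u : ℝ → X → ℝ := fun t => NormedSpace.exp (-(t • H)) *ᵥ f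
  have hderiv (t : ℝ) : HasDerivAt (fun t => ∑ x, m x * |u t x| ^ p)
      (-(p * ∑ x, m x * (|u t x| ^ (p - 2) * u t x) * (H *ᵥ u t) x)) t := by
    have hu x := hasDerivAt_pi.1 (hasDerivAt_exp_neg_smul_mulVec H f t) x
    refine (HasDerivAt.fun_sum fun x _ =>
      ((hasDerivAt_abs_rpow (u t x) hp).comp t (hu x)).const_mul (m x)).congr_deriv ?_
    simp only [mul_sum, ← sum_neg_distrib, Pi.neg_apply]
    exact sum_congr rfl fun x _ => by ring
  refine antitone_of_deriv_nonpos (fun t => (hderiv t).differentiableAt) fun t => ?_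
  rw [(hderiv t).deriv, neg_nonpos]
  exact mul_nonneg (by linarith) (sum_mul_abs_rpow_sub_two_mul_mulVec_nonneg hm hsa hdd hp (u t))

lemma antitone_sum_mul_abs_exp_mulVec_rpow (hm : ∀ x, 0 ≤ m x)
    (hsa : ∀ x y, m x * H x y = m y * H y x) (hdd : ∀ x, ∑ y ∈ univ.erase x, |H x y| ≤ H x x)
    (hp : 1 ≤ p) (f : X → ℝ) :
    Antitone fun t : ℝ => ∑ x, m x * |(NormedSpace.exp (-(t • H)) *ᵥ f) x| ^ p := by
  rcases hp.lt_or_eq with hp | rfl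
  · exact antitone_sum_mul_abs_exp_mulVec_rpow_of_one_lt hm hsa hdd hp f
  intro s t hst
  have hcont (a : X → ℝ) : ContinuousAt (fun q : ℝ => ∑ x, m x * |a x| ^ q) 1 :=
    tendsto_finsetSum _ fun x _ => (Real.continuousAt_const_rpow' one_ne_zero).const_mul (m x)
  exact le_of_tendsto_of_tendsto ((hcont _).mono_left nhdsWithin_le_nhds)
    ((hcont _).mono_left nhdsWithin_le_nhds) (eventually_nhdsWithin_of_forall (s := Set.Ioi 1)
      fun q hq => antitone_sum_mul_abs_exp_mulVec_rpow_of_one_lt hm hsa hdd hq f hst)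

end DiagonallyDominant

theorem stmt_2_general {X : Type*} [Fintype X] [DecidableEq X]
    (m : X → ℝ) (hm : ∀ x, 0 < m x)
    (H : Matrix X X ℝ)
    (hsa : ∀ x y, m x * H x y = m y * H y x)
    (hdd : ∀ x, ∑ y ∈ Finset.univ.erase x, |H x y| ≤ H x x)
    (p : ℝ) (hp : 1 ≤ p) (f : X → ℝ) :
    AntitoneOn (fun t : ℝ =>
        (∑ x, m x * |(NormedSpace.exp (-(t • H))).mulVec f x| ^ p) ^ (1 / p))
      (Set.Ici (0 : ℝ)) := by
  have hm₀ x : 0 ≤ m x := (hm x).le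
  intro s _ t _ hst
  exact Real.rpow_le_rpow (sum_nonneg fun x _ => mul_nonneg (hm₀ x) (by positivity))
    (antitone_sum_mul_abs_exp_mulVec_rpow hm₀ hsa hdd hp f hst) (by positivity)

/-- If a selfadjoint operator `H` on `ℓ²(X,m)` is diagonally dominant,
then for every `p ∈ [1,∞)` the map `t ↦ ‖e^{-tH} f‖_p` is nonincreasing on `[0,∞)`,
where `‖f‖_p^p = ∑_x m(x) |f(x)|^p`. -/
theorem stmt_2 {X : Type*} [Fintype X] [DecidableEq X] [Nonempty X]
    (m : X → ℝ) (hm : ∀ x, 0 < m x)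
    (H : Matrix X X ℝ)
    (hsa : ∀ x y, m x * H x y = m y * H y x)
    (hdd : ∀ x, ∑ y ∈ Finset.univ.erase x, |H x y| ≤ H x x)
    (p : ℝ) (hp : 1 ≤ p) (f : X → ℝ) :
    AntitoneOn (fun t : ℝ =>
        (∑ x, m x * |(NormedSpace.exp (-(t • H))).mulVec f x| ^ p) ^ (1 / p))
      (Set.Ici (0 : ℝ)) :=
  stmt_2_general m hm H hsa hdd p hp f
end

section
/- Let X be a finite set with weight m, and let H be a selfadjoint operator on ℓ²(X,m). Then H is diagonally dominant if and only if H satisfies the maximum principle: Hf(x) ≥ 0 whenever f(x) = ‖f‖_∞. -/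
/-!
Both conditions concern one row of `H` at a time. If `|f| ≤ f x`, then every off-diagonal term
of `(H f)(x)` is at least `-|H x y| f x`, so diagonal dominance of row `x` gives `(H f)(x) ≥ 0`.
Conversely, the test vector equal to `1` at `x` and to `-sign (H x y)` elsewhere attains its sup
norm at `x`, and `(H f)(x) = H x x - ∑_{y ≠ x} |H x y|` for it.
-/

open Finset Matrix

section RowDominance

variable {X : Type*} [Fintype X]

lemma abs_le_of_eq_norm {f : X → ℝ} {x : X} (hf : f x = ‖f‖) (y : X) : |f y| ≤ f x :=
  hf ▸ norm_le_pi_norm f y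

variable [DecidableEq X]

lemma dotProduct_eq_add_sum_erase (r f : X → ℝ) (x : X) :
    r ⬝ᵥ f = r x * f x + ∑ y ∈ univ.erase x, r y * f y :=
  (add_sum_erase _ _ (mem_univ x)).symm

lemma dotProduct_nonneg_of_sum_abs_le {r f : X → ℝ} {x : X}
    (hr : ∑ y ∈ univ.erase x, |r y| ≤ r x) (hf : ∀ y, |f y| ≤ f x) : 0 ≤ r ⬝ᵥ f := by
  have hfx : 0 ≤ f x := (abs_nonneg _).trans (hf x)
  have hterm : ∀ y, -(|r y| * f x) ≤ r y * f y := fun y => by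
    have : |r y * f y| ≤ |r y| * f x := by
      rw [abs_mul]; exact mul_le_mul_of_nonneg_left (hf y) (abs_nonneg _)
    linarith [neg_abs_le (r y * f y)]
  calc 0 ≤ (r x - ∑ y ∈ univ.erase x, |r y|) * f x := mul_nonneg (sub_nonneg.2 hr) hfx
    _ = r x * f x + ∑ y ∈ univ.erase x, -(|r y| * f x) := by
      rw [sub_mul, sum_mul, sum_neg_distrib, sub_eq_add_neg]
    _ ≤ r x * f x + ∑ y ∈ univ.erase x, r y * f y := by gcongr with y; exact hterm y
    _ = r ⬝ᵥ f := (dotProduct_eq_add_sum_erase r f x).symm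

noncomputable def signTestVector (r : X → ℝ) (x : X) : X → ℝ :=
  Function.update (fun y => -(SignType.sign (r y) : ℝ)) x 1

lemma norm_signTestVector (r : X → ℝ) (x : X) : ‖signTestVector r x‖ = 1 := by
  refine le_antisymm ((pi_norm_le_iff_of_nonneg zero_le_one).2 fun y => ?_) ?_
  · rcases eq_or_ne y x with rfl | hy
    · simp [signTestVector]
    · rw [signTestVector, Function.update_of_ne hy, norm_neg]
      rcases SignType.sign (r y) with _ | _ | _ <;> simp
  · simpa [signTestVector] using norm_le_pi_norm (signTestVector r x) x

lemma dotProduct_signTestVector (r : X → ℝ) (x : X) :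
    r ⬝ᵥ signTestVector r x = r x - ∑ y ∈ univ.erase x, |r y| := by
  rw [dotProduct_eq_add_sum_erase _ _ x, sub_eq_add_neg, ← sum_neg_distrib]
  refine congrArg₂ (· + ·) ?_ ?_
  · simp [signTestVector]
  · refine sum_congr rfl fun y hy => ?_
    rw [signTestVector, Function.update_of_ne (ne_of_mem_erase hy), mul_neg, self_mul_sign]

theorem sum_abs_le_iff_forall_dotProduct_nonneg (r : X → ℝ) (x : X) :
    ∑ y ∈ univ.erase x, |r y| ≤ r x ↔ ∀ f : X → ℝ, f x = ‖f‖ → 0 ≤ r ⬝ᵥ f := by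
  refine ⟨fun hr f hf => dotProduct_nonneg_of_sum_abs_le hr (abs_le_of_eq_norm hf), fun h => ?_⟩
  have hmax : signTestVector r x x = ‖signTestVector r x‖ := by
    rw [norm_signTestVector]; simp [signTestVector]
  simpa [dotProduct_signTestVector] using h _ hmax

end RowDominance

theorem stmt_3_general {X : Type*} [Fintype X] [DecidableEq X]
    (H : Matrix X X ℝ) :
    (∀ x, ∑ y ∈ Finset.univ.erase x, |H x y| ≤ H x x) ↔
      (∀ f : X → ℝ, ∀ x, f x = ‖f‖ → 0 ≤ H.mulVec f x) := by
  simp only [sum_abs_le_iff_forall_dotProduct_nonneg (H _)]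
  exact forall_comm

/-- A selfadjoint operator `H` on `ℓ²(X,m)` is diagonally dominant if and
only if it satisfies the maximum principle: `Hf(x) ≥ 0` whenever `f(x) = ‖f‖_∞`. -/
theorem stmt_3 {X : Type*} [Fintype X] [DecidableEq X] [Nonempty X]
    (m : X → ℝ) (hm : ∀ x, 0 < m x)
    (H : Matrix X X ℝ)
    (hsa : ∀ x y, m x * H x y = m y * H y x) :
    (∀ x, ∑ y ∈ Finset.univ.erase x, |H x y| ≤ H x x) ↔
      (∀ f : X → ℝ, ∀ x, f x = ‖f‖ → 0 ≤ H.mulVec f x) :=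
  stmt_3_general H
end

section
/- Let X be a finite set with weight m, H a selfadjoint operator on ℓ²(X,m), and ω : X → (0,∞). Then H is diagonally dominant with respect to ω if and only if H satisfies the weighted maximum principle: Hf(x) ≥ 0 whenever f(x)/ω(x) = max_y |f(y)|/ω(y). -/
/-!
If `H` is diagonally dominant and `f` attains its weighted maximum `c = f x / ω x` at `x`,
then `|f y| ≤ c ω y` for all `y`, so the off-diagonal part of `Hf(x)` is at least
`-c ∑_{y ≠ x} ω y |H x y|`, which the diagonal part `c ω x H x x` compensates.
Conversely, the function equal to `ω x` at `x` and to `-ω y sign (H x y)` elsewhere attains its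
weighted maximum `1` at `x`, and `Hf(x)` is exactly the dominance defect `ω x H x x - ∑ ω y |H x y|`.
-/

open Finset

theorem abs_le_div_mul_of_div_eq_ciSup {X : Type*} [Finite X] {ω f : X → ℝ}
    (hω : ∀ y, 0 < ω y) {x : X} (hx : f x / ω x = ⨆ y, |f y| / ω y) (y : X) :
    |f y| ≤ f x / ω x * ω y := by
  rw [hx, ← div_le_iff₀ (hω y)]
  exact le_ciSup (Set.finite_range fun y => |f y| / ω y).bddAbove y

namespace Matrix

variable {X : Type*} [Fintype X] [DecidableEq X]

theorem mulVec_apply_eq_diag_add_sum_erase {R : Type*} [NonUnitalNonAssocSemiring R]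
    (H : Matrix X X R) (f : X → R) (x : X) :
    (H *ᵥ f) x = H x x * f x + ∑ y ∈ univ.erase x, H x y * f y :=
  (add_sum_erase _ (fun y => H x y * f y) (mem_univ x)).symm

theorem mulVec_apply_nonneg_of_diagDominant {H : Matrix X X ℝ} {ω f : X → ℝ} {x : X} {c : ℝ}
    (hdd : ∑ y ∈ univ.erase x, ω y * |H x y| ≤ ω x * H x x) (hωx : 0 < ω x)
    (hf : ∀ y, |f y| ≤ c * ω y) (hfx : f x = c * ω x) :
    0 ≤ (H *ᵥ f) x := by
  have hc : 0 ≤ c := nonneg_of_mul_nonneg_left ((abs_nonneg _).trans (hf x)) hωx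
  have hoff : -(c * ∑ y ∈ univ.erase x, ω y * |H x y|) ≤ ∑ y ∈ univ.erase x, H x y * f y := by
    rw [mul_sum, ← sum_neg_distrib]
    refine sum_le_sum fun y _ => ?_
    have : |H x y * f y| ≤ c * (ω y * |H x y|) :=
      calc |H x y * f y| = |H x y| * |f y| := abs_mul _ _
        _ ≤ |H x y| * (c * ω y) := mul_le_mul_of_nonneg_left (hf y) (abs_nonneg _)
        _ = c * (ω y * |H x y|) := by ring
    linarith [neg_abs_le (H x y * f y)]
  rw [mulVec_apply_eq_diag_add_sum_erase, hfx]
  nlinarith [mul_le_mul_of_nonneg_left hdd hc]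

noncomputable def diagDominanceTestVector (H : Matrix X X ℝ) (ω : X → ℝ) (x : X) : X → ℝ :=
  fun y => if y = x then ω x else -(ω y * SignType.sign (H x y))

theorem mulVec_diagDominanceTestVector_apply (H : Matrix X X ℝ) (ω : X → ℝ) (x : X) :
    (H *ᵥ H.diagDominanceTestVector ω x) x =
      ω x * H x x - ∑ y ∈ univ.erase x, ω y * |H x y| := by
  rw [mulVec_apply_eq_diag_add_sum_erase, sub_eq_add_neg, ← sum_neg_distrib]
  congr 1
  · simp [diagDominanceTestVector, mul_comm]
  · refine sum_congr rfl fun y hy => ?_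
    simp only [diagDominanceTestVector, if_neg (ne_of_mem_erase hy)]
    rw [← self_mul_sign (H x y)]
    ring

theorem diagDominanceTestVector_div_eq_ciSup (H : Matrix X X ℝ) {ω : X → ℝ}
    (hω : ∀ y, 0 < ω y) (x : X) :
    H.diagDominanceTestVector ω x x / ω x =
      ⨆ y, |H.diagDominanceTestVector ω x y| / ω y := by
  have : Nonempty X := ⟨x⟩
  have hvx : H.diagDominanceTestVector ω x x = ω x := if_pos rfl
  have hle : ∀ y, |H.diagDominanceTestVector ω x y| / ω y ≤ 1 := by
    intro y
    rw [div_le_one (hω y)]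
    by_cases hy : y = x
    · rw [hy, hvx, abs_of_pos (hω x)]
    · rcases lt_trichotomy (H x y) 0 with h | h | h <;>
        simp [diagDominanceTestVector, hy, h, abs_of_pos (hω y), (hω y).le]
  have hge : 1 ≤ ⨆ y, |H.diagDominanceTestVector ω x y| / ω y := by
    simpa [hvx, abs_of_pos (hω x), (hω x).ne'] using
      le_ciSup (Set.finite_range fun y => |H.diagDominanceTestVector ω x y| / ω y).bddAbove x
  rw [hvx, div_self (hω x).ne']
  exact le_antisymm hge (ciSup_le hle)

end Matrix

theorem stmt_5_general {X : Type*} [Fintype X] [DecidableEq X]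
    (ω : X → ℝ) (hω : ∀ x, 0 < ω x)
    (H : Matrix X X ℝ) :
    (∀ x, ∑ y ∈ Finset.univ.erase x, ω y * |H x y| ≤ ω x * H x x) ↔
      (∀ f : X → ℝ, ∀ x, f x / ω x = (⨆ y, |f y| / ω y) → 0 ≤ H.mulVec f x) := by
  constructor
  · intro hdd f x hx
    exact H.mulVec_apply_nonneg_of_diagDominant (hdd x) (hω x)
      (abs_le_div_mul_of_div_eq_ciSup hω hx) (div_mul_cancel₀ _ (hω x).ne').symm
  · intro hmp x
    have h := hmp _ x (H.diagDominanceTestVector_div_eq_ciSup hω x)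
    rw [Matrix.mulVec_diagDominanceTestVector_apply] at h
    linarith

/-- `H` is diagonally dominant with respect to `ω` iff `H` satisfies the
weighted maximum principle: `Hf(x) ≥ 0` whenever `f(x)/ω(x) = max_y |f(y)|/ω(y)`. -/
theorem stmt_5 {X : Type*} [Fintype X] [DecidableEq X] [Nonempty X]
    (m ω : X → ℝ) (hm : ∀ x, 0 < m x) (hω : ∀ x, 0 < ω x)
    (H : Matrix X X ℝ)
    (hsa : ∀ x y, m x * H x y = m y * H y x) :
    (∀ x, ∑ y ∈ Finset.univ.erase x, ω y * |H x y| ≤ ω x * H x x) ↔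
      (∀ f : X → ℝ, ∀ x, f x / ω x = (⨆ y, |f y| / ω y) → 0 ≤ H.mulVec f x) :=
  stmt_5_general ω hω H
end

section
/- Let X be a finite set with weight m, H selfadjoint on ℓ²(X,m) and diagonally dominant. For p ∈ (1,∞), g : X → ℝ, and φ(s) := |s|^{p-1} sgn(s), one has ⟨Hg, φ(g)⟩ ≥ 0, where ⟨f,h⟩ = Σ_x f(x)h(x)m(x). -/
/-!
With `a := diagonal m * H`, which is symmetric, the sum is `⟨a g, φ ∘ g⟩ = Σₓ Σ_y a x y g y φ (g x)`.
Since `g x φ (g x) ≥ 0`, diagonal dominance bounds it below by the off-diagonal sum of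
`|a x y| g x φ (g x) + a x y g y φ (g x)`. Symmetrising over the pair `{x, y}` turns each summand
into `|a x y| (g x + σ g y)(φ (g x) + σ φ (g y))` with `σ = sgn (a x y)`, which is nonnegative
because `φ` is odd and increasing.
-/

open Finset Matrix

lemma monotone_abs_rpow_mul_sign {q : ℝ} (hq : 0 ≤ q) :
    Monotone fun s : ℝ => |s| ^ q * Real.sign s := by
  refine monotone_of_odd_of_monotoneOn_nonneg (fun s => by simp [Real.sign_neg])
    fun s hs t ht hst => ?_
  rcases (Set.mem_Ici.1 hs).eq_or_lt with rfl | hs_pos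
  · rcases (Set.mem_Ici.1 ht).eq_or_lt with rfl | ht_pos
    · rfl
    · simp [Real.sign_of_pos ht_pos, Real.rpow_nonneg]
  · simp only [abs_of_pos hs_pos, abs_of_pos (hs_pos.trans_le hst), Real.sign_of_pos hs_pos,
      Real.sign_of_pos (hs_pos.trans_le hst), mul_one]
    exact Real.rpow_le_rpow hs_pos.le hst hq

section OddMonotone

variable {φ : ℝ → ℝ} (hφ : Monotone φ) (hodd : ∀ s, φ (-s) = -φ s)
include hφ hodd

lemma mul_apply_nonneg_of_odd (u : ℝ) : 0 ≤ u * φ u := by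
  have h0 : φ 0 = 0 := by
    have := hodd 0
    rw [neg_zero] at this
    linarith
  simpa [h0, mul_comm] using (monovary_id_iff.2 hφ).sub_mul_sub_nonneg 0 u

/-- Monotonicity of `φ` at the pair `(u, -v)` if `c ≥ 0`, and at `(u, v)` if `c < 0`. -/
lemma abs_mul_add_mul_nonneg_of_odd (c u v : ℝ) :
    0 ≤ |c| * (u * φ u + v * φ v) + c * (v * φ u + u * φ v) := by
  have hmono : ∀ u v, 0 ≤ (φ v - φ u) * (v - u) := (monovary_id_iff.2 hφ).sub_mul_sub_nonneg
  rcases abs_cases c with ⟨hc, hc0⟩ | ⟨hc, hc0⟩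
  · have := hmono (-v) u
    rw [hodd] at this
    rw [hc]; nlinarith [mul_nonneg hc0 this]
  · have := hmono v u
    rw [hc]; nlinarith [mul_nonneg (neg_nonneg.2 hc0.le) this]

end OddMonotone

section OffDiagonal

variable {X : Type*} [Fintype X] [DecidableEq X]

lemma sum_sum_erase_comm (F : X → X → ℝ) :
    ∑ x, ∑ y ∈ univ.erase x, F y x = ∑ x, ∑ y ∈ univ.erase x, F x y := by
  simp only [sum_erase_eq_sub (mem_univ _), sum_sub_distrib]
  rw [sum_comm]

lemma sum_sum_erase_nonneg_of_add_swap_nonneg {F : X → X → ℝ}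
    (hF : ∀ x y, 0 ≤ F x y + F y x) : 0 ≤ ∑ x, ∑ y ∈ univ.erase x, F x y := by
  have h := sum_nonneg fun x (_ : x ∈ univ) =>
    sum_nonneg fun y (_ : y ∈ univ.erase x) => hF x y
  simp only [sum_add_distrib, sum_sum_erase_comm F] at h
  linarith

end OffDiagonal

theorem Matrix.IsSymm.mulVec_dotProduct_comp_nonneg {X : Type*} [Fintype X] [DecidableEq X]
    {a : Matrix X X ℝ} (hsymm : a.IsSymm) (hdd : ∀ x, ∑ y ∈ univ.erase x, |a x y| ≤ a x x)
    {φ : ℝ → ℝ} (hφ : Monotone φ) (hodd : ∀ s, φ (-s) = -φ s) (g : X → ℝ) :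
    0 ≤ (a *ᵥ g) ⬝ᵥ (φ ∘ g) := by
  set F : X → X → ℝ := fun x y => |a x y| * (g x * φ (g x)) + a x y * g y * φ (g x)
  have h_split : ∀ x, (a *ᵥ g) x * φ (g x)
      = a x x * (g x * φ (g x)) + ∑ y ∈ univ.erase x, a x y * g y * φ (g x) := by
    intro x
    rw [mulVec, dotProduct, sum_mul, ← add_sum_erase _ _ (mem_univ x), mul_assoc]
  have h_diag : ∀ x, ∑ y ∈ univ.erase x, F x y ≤ (a *ᵥ g) x * φ (g x) := by
    intro x
    rw [h_split, sum_add_distrib, ← sum_mul]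
    gcongr
    · exact mul_apply_nonneg_of_odd hφ hodd _
    · exact hdd x
  have h_pair : ∀ x y, 0 ≤ F x y + F y x := by
    intro x y
    have := abs_mul_add_mul_nonneg_of_odd hφ hodd (a x y) (g x) (g y)
    simp only [F, hsymm.apply x y]
    linarith
  calc 0 ≤ ∑ x, ∑ y ∈ univ.erase x, F x y := sum_sum_erase_nonneg_of_add_swap_nonneg h_pair
    _ ≤ (a *ᵥ g) ⬝ᵥ (φ ∘ g) := sum_le_sum fun x _ => h_diag x

/-- For a selfadjoint diagonally dominant `H` on `ℓ²(X,m)`, `p ∈ (1,∞)`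
and `φ(s) = |s|^{p-1} sgn(s)`, one has `⟨Hg, φ(g)⟩ ≥ 0`. -/
theorem stmt_9 {X : Type*} [Fintype X] [DecidableEq X]
    (m : X → ℝ) (hm : ∀ x, 0 < m x)
    (H : Matrix X X ℝ)
    (hsa : ∀ x y, m x * H x y = m y * H y x)
    (hdd : ∀ x, ∑ y ∈ Finset.univ.erase x, |H x y| ≤ H x x)
    (p : ℝ) (hp : 1 < p) (g : X → ℝ) :
    0 ≤ ∑ x, H.mulVec g x * (|g x| ^ (p - 1) * Real.sign (g x)) * m x := by
  set a := Matrix.diagonal m * H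
  have ha : ∀ x y, a x y = m x * H x y := fun x y => Matrix.diagonal_mul m H x y
  have hsymm : a.IsSymm := Matrix.IsSymm.ext fun x y => by rw [ha, ha, hsa]
  have hdd_a : ∀ x, ∑ y ∈ univ.erase x, |a x y| ≤ a x x := fun x => by
    simpa only [ha, abs_mul, abs_of_pos (hm x), ← mul_sum] using
      mul_le_mul_of_nonneg_left (hdd x) (hm x).le
  convert Matrix.IsSymm.mulVec_dotProduct_comp_nonneg hsymm hdd_a
    (monotone_abs_rpow_mul_sign (q := p - 1) (by linarith)) (fun s => by simp [Real.sign_neg]) g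
    using 1
  rw [← mulVec_mulVec, dotProduct]
  refine sum_congr rfl fun x _ => ?_
  rw [mulVec_diagonal, Function.comp_apply]
  ring
end

section
/- Let (X, δ, m) be a cell complex with Hodge Laplacian H = δδ* + δ*δ, and define the Forman curvature F(x) := H x(x) − Σ_{y≠x} |H y(x)|. Then for every cell x, F(x) ≤ κ(x), where κ(x) := inf { δδ*δf(x) : f ∈ C(X), δf(x) = 1, |δf(y)| ≤ 1 for all y } is the Ollivier curvature (with inf over a nonempty feasible set). -/
/-!
Because `δ² = 0`, the vector `g = δf` satisfies `δδ*δf = (δδ* + δ*δ) g = H g`. A feasible `f`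
makes `g x = 1` and `|g| ≤ 1`, so the row of `H` at `x` gives, as in Gershgorin's theorem,
`H g (x) ≥ H x x - ∑_{y ≠ x} |H x y|`, which is the Forman curvature.
-/

open Matrix

theorem Matrix.diag_sub_sum_abs_offDiag_le_mulVec_apply {n R : Type*} [Fintype n] [DecidableEq n]
    [CommRing R] [LinearOrder R] [IsStrictOrderedRing R] (A : Matrix n n R) {g : n → R} {x : n}
    (hgx : g x = 1) (hg : ∀ y, |g y| ≤ 1) :
    A x x - ∑ y ∈ Finset.univ.erase x, |A x y| ≤ (A *ᵥ g) x := by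
  have hsplit : (A *ᵥ g) x = A x x + ∑ y ∈ Finset.univ.erase x, A x y * g y := by
    rw [mulVec, dotProduct, ← Finset.add_sum_erase _ _ (Finset.mem_univ x), hgx, mul_one]
  have hterm (y : n) : -|A x y| ≤ A x y * g y :=
    calc -|A x y| ≤ -|A x y * g y| := by
          rw [neg_le_neg_iff, abs_mul]
          exact mul_le_of_le_one_right (abs_nonneg _) (hg y)
      _ ≤ A x y * g y := neg_abs_le _
  rw [hsplit, sub_eq_add_neg, ← Finset.sum_neg_distrib]
  gcongr with y
  exact hterm y

theorem Matrix.anticommutator_mulVec_mulVec_of_mul_self_eq_zero {n R : Type*} [Fintype n]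
    [CommRing R] {A : Matrix n n R} (hA : A * A = 0) (B : Matrix n n R) (f : n → R) :
    (A * B + B * A) *ᵥ (A *ᵥ f) = A *ᵥ (B *ᵥ (A *ᵥ f)) := by
  rw [mulVec_mulVec, mulVec_mulVec, mulVec_mulVec, Matrix.add_mul, Matrix.mul_assoc B, hA,
    Matrix.mul_zero, add_zero, Matrix.mul_assoc]

theorem stmt_13_general {X : Type*} [Fintype X] [DecidableEq X]
    (δ : X → X → ℝ) (m : X → ℝ)
    (hsq : ∀ v z, ∑ x, δ v x * δ x z = 0)
    (x : X) :
    let D : Matrix X X ℝ := Matrix.of fun z v => δ v z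
    let Dstar : Matrix X X ℝ := Matrix.of fun a z => m z / m a * δ a z
    let H : Matrix X X ℝ := D * Dstar + Dstar * D
    (∃ f : X → ℝ, D.mulVec f x = 1 ∧ ∀ y, |D.mulVec f y| ≤ 1) →
    H x x - (∑ y ∈ Finset.univ.erase x, |H x y|) ≤
      sInf {c : ℝ | ∃ f : X → ℝ, D.mulVec f x = 1 ∧ (∀ y, |D.mulVec f y| ≤ 1) ∧
        c = D.mulVec (Dstar.mulVec (D.mulVec f)) x} := by
  intro D Dstar H ⟨f₀, hf₀x, hf₀⟩
  have hDD : D * D = 0 := by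
    ext z v
    simp only [mul_apply, Matrix.zero_apply, D, of_apply, mul_comm (δ _ z)]
    exact hsq v z
  refine le_csInf ⟨_, f₀, hf₀x, hf₀, rfl⟩ ?_
  rintro c ⟨f, hfx, hf, rfl⟩
  rw [← Matrix.anticommutator_mulVec_mulVec_of_mul_self_eq_zero hDD]
  exact H.diag_sub_sum_abs_offDiag_le_mulVec_apply hfx hf

/-- For a cell complex with Hodge Laplacian `H = δδ* + δ*δ` and Forman
curvature `F(x) = H x(x) − ∑_{y≠x}|H y(x)|`, the Forman curvature is bounded above by
the Ollivier curvature `κ(x) = inf { δδ*δf(x) : δf(x) = 1, |δf| ≤ 1 }` (the infimum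
being over a nonempty feasible set). -/
theorem stmt_13 {X : Type*} [Fintype X] [DecidableEq X]
    (dim : X → ℕ) (δ : X → X → ℝ) (m : X → ℝ) (hm : ∀ x, 0 < m x)
    (hval : ∀ v z, δ v z = -1 ∨ δ v z = 0 ∨ δ v z = 1)
    (hdim : ∀ v z, δ v z ≠ 0 → dim z = dim v + 1)
    (hsq : ∀ v z, ∑ x, δ v x * δ x z = 0)
    (x : X) :
    let D : Matrix X X ℝ := Matrix.of fun z v => δ v z
    let Dstar : Matrix X X ℝ := Matrix.of fun a z => m z / m a * δ a z
    let H : Matrix X X ℝ := D * Dstar + Dstar * D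
    (∃ f : X → ℝ, D.mulVec f x = 1 ∧ ∀ y, |D.mulVec f y| ≤ 1) →
    H x x - (∑ y ∈ Finset.univ.erase x, |H x y|) ≤
      sInf {c : ℝ | ∃ f : X → ℝ, D.mulVec f x = 1 ∧ (∀ y, |D.mulVec f y| ≤ 1) ∧
        c = D.mulVec (Dstar.mulVec (D.mulVec f)) x} :=
  stmt_13_general δ m hsq x
end

section
/- Let (X, δ, m) be a cell complex, x a cell, and suppose h : X → ℝ satisfies h(x) = 1, |h(y)| ≤ 1 for all y, and δx(z)·δh(z) ≤ 0 for all cells z. Then F(x) ≤ δδ*h(x), where F(x) := H x(x) − Σ_{y≠x}|H y(x)| with H = δδ* + δ*δ. -/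
/-!
Since `h(x) = 1` and `|h| ≤ 1`, testing the row of `H` at `x` against `h` gives `F(x) ≤ (Hh)(x)`,
as in Gershgorin's bound. Splitting `H = δδ* + δ*δ`, the sign condition makes every summand of
`(δ*δh)(x) = ∑_z m(z)/m(x) · δx(z) · δh(z)` nonpositive, hence `(Hh)(x) ≤ (δδ*h)(x)`.
-/

open Matrix

theorem Matrix.diag_sub_sum_abs_offDiag_le_mulVec {X R : Type*} [Fintype X] [DecidableEq X]
    [Ring R] [LinearOrder R] [IsOrderedRing R] (A : Matrix X X R) (h : X → R) (x : X)
    (hx : h x = 1) (hbd : ∀ y, |h y| ≤ 1) :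
    A x x - ∑ y ∈ Finset.univ.erase x, |A x y| ≤ (A *ᵥ h) x := by
  have hoff : ∀ y ∈ Finset.univ.erase x, -|A x y| ≤ A x y * h y := fun y _ =>
    calc -|A x y| ≤ -(|A x y| * |h y|) :=
          neg_le_neg (mul_le_of_le_one_right (abs_nonneg _) (hbd y))
      _ = -|A x y * h y| := by rw [abs_mul]
      _ ≤ A x y * h y := neg_abs_le _
  have hrow : (A *ᵥ h) x = A x x + ∑ y ∈ Finset.univ.erase x, A x y * h y := by
    rw [mulVec, dotProduct, ← Finset.add_sum_erase _ _ (Finset.mem_univ x), hx, mul_one]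
  rw [hrow, sub_eq_add_neg, ← Finset.sum_neg_distrib]
  gcongr with y hy
  exact hoff y hy

theorem weightedAdjoint_mulVec_nonpos {X : Type*} [Fintype X] (δ : X → X → ℝ) (m : X → ℝ)
    (hm : ∀ x, 0 ≤ m x) (x : X) (v : X → ℝ) (hv : ∀ z, δ x z * v z ≤ 0) :
    ((Matrix.of fun a z => m z / m a * δ a z) *ᵥ v) x ≤ 0 :=
  Finset.sum_nonpos fun z _ => by
    simpa only [of_apply, mul_assoc] using
      mul_nonpos_of_nonneg_of_nonpos (div_nonneg (hm z) (hm x)) (hv z)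

theorem stmt_14_general {X : Type*} [Fintype X] [DecidableEq X]
    (δ : X → X → ℝ) (m : X → ℝ) (hm : ∀ x, 0 < m x)
    (x : X) (h : X → ℝ)
    (hx : h x = 1) (hbd : ∀ y, |h y| ≤ 1) :
    let D : Matrix X X ℝ := Matrix.of fun z v => δ v z
    let Dstar : Matrix X X ℝ := Matrix.of fun a z => m z / m a * δ a z
    let H : Matrix X X ℝ := D * Dstar + Dstar * D
    (∀ z, δ x z * D.mulVec h z ≤ 0) →
    H x x - (∑ y ∈ Finset.univ.erase x, |H x y|) ≤ D.mulVec (Dstar.mulVec h) x := by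
  intro D Dstar H hsign
  have hsplit : H *ᵥ h = D *ᵥ (Dstar *ᵥ h) + Dstar *ᵥ (D *ᵥ h) := by
    simp only [H, add_mulVec, mulVec_mulVec]
  have hcurv : (Dstar *ᵥ (D *ᵥ h)) x ≤ 0 :=
    weightedAdjoint_mulVec_nonpos δ m (fun a => (hm a).le) x _ hsign
  calc H x x - ∑ y ∈ Finset.univ.erase x, |H x y| ≤ (H *ᵥ h) x :=
        H.diag_sub_sum_abs_offDiag_le_mulVec h x hx hbd
    _ = (D *ᵥ (Dstar *ᵥ h)) x + (Dstar *ᵥ (D *ᵥ h)) x := by rw [hsplit]; rfl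
    _ ≤ (D *ᵥ (Dstar *ᵥ h)) x := by linarith

/-- weak LP duality: For a cell complex with Hodge Laplacian
`H = δδ* + δ*δ` and Forman curvature `F(x) = H x(x) − ∑_{y≠x}|H y(x)|`, every `h` with
`h(x) = 1`, `|h| ≤ 1` and `δx(z)·δh(z) ≤ 0` for all `z` satisfies `F(x) ≤ δδ*h(x)`. -/
theorem stmt_14 {X : Type*} [Fintype X] [DecidableEq X]
    (dim : X → ℕ) (δ : X → X → ℝ) (m : X → ℝ) (hm : ∀ x, 0 < m x)
    (hval : ∀ v z, δ v z = -1 ∨ δ v z = 0 ∨ δ v z = 1)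
    (hdim : ∀ v z, δ v z ≠ 0 → dim z = dim v + 1)
    (hsq : ∀ v z, ∑ x, δ v x * δ x z = 0)
    (x : X) (h : X → ℝ)
    (hx : h x = 1) (hbd : ∀ y, |h y| ≤ 1) :
    let D : Matrix X X ℝ := Matrix.of fun z v => δ v z
    let Dstar : Matrix X X ℝ := Matrix.of fun a z => m z / m a * δ a z
    let H : Matrix X X ℝ := D * Dstar + Dstar * D
    (∀ z, δ x z * D.mulVec h z ≤ 0) →
    H x x - (∑ y ∈ Finset.univ.erase x, |H x y|) ≤ D.mulVec (Dstar.mulVec h) x :=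
  stmt_14_general δ m hm x h hx hbd
end

section
/- Let X be a finite set with weight m : X → (0,∞) and J : C(X) → C(X) linear with matrix entries J y(x). Then the condition 'J x(x)/m(x) ≥ |J y(x)|/m(y) for all x, y' is equivalent to: J f(x) ≥ 0 whenever 2⟨1_x, f⟩ ≥ ‖f‖₁, where ⟨g,f⟩ = Σ_y g(y)f(y)m(y) and ‖f‖₁ = Σ_y m(y)|f(y)|. -/
/-!
Row by row, the condition says `|J x y| ≤ a m(y)` with `a := J x x / m(x) ≥ 0`. Then
`J f(x) ≥ a m(x) f(x) - a ∑_{y ≠ x} m(y) |f(y)| ≥ a (2 m(x) f(x) - ‖f‖₁) ≥ 0`.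
Conversely, the test vectors `1_x` and `m(y) 1_x - sign(J x y) m(x) 1_y` satisfy
`2⟨1_x, f⟩ ≥ ‖f‖₁` and return `J x x ≥ 0` and `m(y) J x x - m(x) |J x y| ≥ 0`.
-/

open Finset

section

variable {X : Type*} [Fintype X] {m r : X → ℝ} {x : X}

theorem dotProduct_nonneg_of_abs_div_le (hm : ∀ y, 0 < m y)
    (hr : ∀ y, |r y| / m y ≤ r x / m x) {f : X → ℝ}
    (hf : ∑ y, m y * |f y| ≤ 2 * (m x * f x)) : 0 ≤ r ⬝ᵥ f := by
  classical
  set a := r x / m x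
  have ha : 0 ≤ a := (div_nonneg (abs_nonneg _) (hm x).le).trans (hr x)
  have hrx : r x = a * m x := (div_mul_cancel₀ _ (hm x).ne').symm
  have hterm : ∀ y, -(a * (m y * |f y|)) ≤ r y * f y := fun y => by
    have hry : |r y| ≤ a * m y := (div_le_iff₀ (hm y)).mp (hr y)
    calc -(a * (m y * |f y|)) ≤ -|r y * f y| := by
          rw [abs_mul, neg_le_neg_iff, ← mul_assoc]
          exact mul_le_mul_of_nonneg_right hry (abs_nonneg _)
      _ ≤ r y * f y := neg_abs_le _
  have hrest : -(a * ∑ y ∈ univ.erase x, m y * |f y|) ≤ ∑ y ∈ univ.erase x, r y * f y := by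
    rw [mul_sum, ← sum_neg_distrib]
    exact sum_le_sum fun y _ => hterm y
  have hnorm := add_sum_erase univ (fun y => m y * |f y|) (mem_univ x)
  have hdot : r ⬝ᵥ f = r x * f x + ∑ y ∈ univ.erase x, r y * f y :=
    (add_sum_erase univ (fun y => r y * f y) (mem_univ x)).symm
  have hfx : 0 ≤ m x * (|f x| - f x) := mul_nonneg (hm x).le (sub_nonneg.2 (le_abs_self _))
  calc 0 ≤ a * (2 * (m x * f x) - ∑ y, m y * |f y|) + a * (m x * (|f x| - f x)) :=
        add_nonneg (mul_nonneg ha (sub_nonneg.2 hf)) (mul_nonneg ha hfx)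
    _ = r x * f x - a * ∑ y ∈ univ.erase x, m y * |f y| := by rw [hrx, ← hnorm]; ring
    _ ≤ r ⬝ᵥ f := by rw [hdot]; linarith

theorem nonneg_of_dotProduct_nonneg (hm : ∀ y, 0 < m y)
    (hr : ∀ f : X → ℝ, ∑ y, m y * |f y| ≤ 2 * (m x * f x) → 0 ≤ r ⬝ᵥ f) : 0 ≤ r x := by
  classical
  have hsum : ∑ y, m y * |(Pi.single x 1 : X → ℝ) y| = m x := by
    simp [Pi.single_apply, apply_ite abs, mul_ite]
  simpa [dotProduct_single] using
    hr (Pi.single x 1) (by rw [hsum, Pi.single_eq_same]; linarith [hm x])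

theorem abs_div_le_of_dotProduct_nonneg (hm : ∀ y, 0 < m y)
    (hr : ∀ f : X → ℝ, ∑ y, m y * |f y| ≤ 2 * (m x * f x) → 0 ≤ r ⬝ᵥ f) (y : X) :
    |r y| / m y ≤ r x / m x := by
  classical
  obtain rfl | hyx := eq_or_ne y x
  · rw [abs_of_nonneg (nonneg_of_dotProduct_nonneg hm hr)]
  set s : ℝ := (SignType.sign (r y) : ℝ)
  have hs : |s| ≤ 1 := by
    simp only [s]
    cases SignType.sign (r y) <;> simp
  set f : X → ℝ := Pi.single x (m y) - Pi.single y (s * m x)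
  have hfx : f x = m y := by simp [f, hyx.symm]
  have hfy : f y = -(s * m x) := by simp [f, hyx]
  have hnorm : ∑ z, m z * |f z| = m x * m y + m y * (|s| * m x) := by
    rw [Fintype.sum_eq_add x y hyx.symm fun z hz => by simp [f, hz.1, hz.2], hfx, hfy, abs_neg,
      abs_mul, abs_of_pos (hm x), abs_of_pos (hm y)]
  have hdot : r ⬝ᵥ f = r x * m y - |r y| * m x := by
    rw [dotProduct_sub, dotProduct_single, dotProduct_single, ← mul_assoc, self_mul_sign]
  have hf : ∑ z, m z * |f z| ≤ 2 * (m x * f x) := by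
    rw [hnorm, hfx]
    nlinarith [mul_pos (hm x) (hm y)]
  rw [div_le_div_iff₀ (hm y) (hm x)]
  linarith [hr f hf]

theorem forall_abs_div_le_iff_dotProduct_nonneg (hm : ∀ y, 0 < m y) :
    (∀ y, |r y| / m y ≤ r x / m x) ↔
      ∀ f : X → ℝ, ∑ y, m y * |f y| ≤ 2 * (m x * f x) → 0 ≤ r ⬝ᵥ f :=
  ⟨fun hr _ => dotProduct_nonneg_of_abs_div_le hm hr, abs_div_le_of_dotProduct_nonneg hm⟩

end

/-- For a linear operator `J` on `C(X)`, the condition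
`J x(x)/m(x) ≥ |J y(x)|/m(y)` for all `x, y` is equivalent to: `J f(x) ≥ 0` whenever
`2⟨1_x, f⟩ ≥ ‖f‖₁`, i.e. whenever `2 m(x) f(x) ≥ ∑_y m(y)|f(y)|`. -/
theorem stmt_15 {X : Type*} [Fintype X]
    (m : X → ℝ) (hm : ∀ x, 0 < m x)
    (J : Matrix X X ℝ) :
    (∀ x y, |J x y| / m y ≤ J x x / m x) ↔
      (∀ f : X → ℝ, ∀ x, (∑ y, m y * |f y|) ≤ 2 * (m x * f x) → 0 ≤ J.mulVec f x) := by
  rw [forall_comm (α := X → ℝ)]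
  exact forall_congr' fun x => forall_abs_div_le_iff_dotProduct_nonneg hm
end

section
/- Let (X, δ, m) be a 1-dimensional cell complex (weighted graph) with edge x = (v,w), and let ρ : N(v,w) × N(w,v) → [0,∞) be arbitrary, where N(v,w) = S₁(v)∖{w}. Define A_ρ(v') := Q(v,v') − Σ_{w'} ρ(v',w') and B_ρ(w') := Q(w,w') − Σ_{v'} ρ(v',w'). Then for every f : X₀ → ℝ with |f(a)−f(b)| ≤ d(a,b) (1-Lipschitz for the combinatorial graph distance d) and f(w) − f(v) = 1: Δf(v) − Δf(w) ≥ Q(v,w) + Q(w,v) − Σ_{v'}|A_ρ(v')| − Σ_{w'}|B_ρ(w')| + Σ_{v',w'} ρ(v',w')(1 − d(v',w')), where Δf(u) := Σ_{u'} Q(u,u')(f(u') − f(u)). -/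
/-!
Split off the edge term from `Δf(v)` and `Δf(w)`; by `f(w) − f(v) = 1` it contributes
`Q(v,w) + Q(w,v)`. In the remaining sums write `Q(v,v') = A_ρ(v') + ∑_{w'} ρ(v',w')` and
`Q(w,w') = B_ρ(w') + ∑_{v'} ρ(v',w')`. The `A_ρ` and `B_ρ` parts are bounded below by
`−∑|A_ρ|` and `−∑|B_ρ|` because `f` changes by at most `1` along an edge, and the `ρ` part
pairs the increments as `(f(v') − f(v)) − (f(w') − f(w)) = f(v') − f(w') + 1 ≥ 1 − d(v',w')`.
-/

open Finset

lemma abs_sum_mul_le_sum_abs {ι : Type*} (s : Finset ι) (a x : ι → ℝ)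
    (hx : ∀ i ∈ s, |x i| ≤ 1) : |∑ i ∈ s, a i * x i| ≤ ∑ i ∈ s, |a i| :=
  (abs_sum_le_sum_abs _ _).trans <| sum_le_sum fun i hi => by
    rw [abs_mul]
    exact mul_le_of_le_one_right (abs_nonneg _) (hx i hi)

lemma sum_mul_sub_sum_mul_eq_transport {ι κ : Type*} (s : Finset ι) (t : Finset κ)
    (p : ι → ℝ) (q : κ → ℝ) (ρ : ι → κ → ℝ) (a : ι → ℝ) (b : κ → ℝ) :
    ∑ i ∈ s, p i * a i - ∑ j ∈ t, q j * b j =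
      ∑ i ∈ s, (p i - ∑ j ∈ t, ρ i j) * a i - ∑ j ∈ t, (q j - ∑ i ∈ s, ρ i j) * b j
        + ∑ i ∈ s, ∑ j ∈ t, ρ i j * (a i - b j) := by
  simp only [sub_mul, mul_sub, sum_mul, sum_sub_distrib]
  rw [sum_comm (s := s) (t := t) (f := fun i j => ρ i j * b j)]
  ring

lemma transport_cost_le_sum_mul_sub_sum_mul {ι κ : Type*} (s : Finset ι) (t : Finset κ)
    (p : ι → ℝ) (q : κ → ℝ) (ρ c : ι → κ → ℝ) (a : ι → ℝ) (b : κ → ℝ)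
    (hρ : ∀ i j, 0 ≤ ρ i j) (ha : ∀ i ∈ s, |a i| ≤ 1) (hb : ∀ j ∈ t, |b j| ≤ 1)
    (hc : ∀ i ∈ s, ∀ j ∈ t, c i j ≤ a i - b j) :
    -(∑ i ∈ s, |p i - ∑ j ∈ t, ρ i j|) - (∑ j ∈ t, |q j - ∑ i ∈ s, ρ i j|)
        + ∑ i ∈ s, ∑ j ∈ t, ρ i j * c i j
      ≤ ∑ i ∈ s, p i * a i - ∑ j ∈ t, q j * b j := by
  rw [sum_mul_sub_sum_mul_eq_transport s t p q ρ a b]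
  have hA := abs_le.1 (abs_sum_mul_le_sum_abs s (fun i => p i - ∑ j ∈ t, ρ i j) a ha)
  have hB := abs_le.1 (abs_sum_mul_le_sum_abs t (fun j => q j - ∑ i ∈ s, ρ i j) b hb)
  have hcost : ∑ i ∈ s, ∑ j ∈ t, ρ i j * c i j ≤ ∑ i ∈ s, ∑ j ∈ t, ρ i j * (a i - b j) :=
    sum_le_sum fun i hi => sum_le_sum fun j hj =>
      mul_le_mul_of_nonneg_left (hc i hi j hj) (hρ i j)
  linarith [hA.1, hB.2]

namespace SimpleGraph

variable {V : Type*} (G : SimpleGraph V)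

lemma abs_sub_le_one_of_adj {f : V → ℝ} (hlip : ∀ a b, |f a - f b| ≤ (G.dist a b : ℝ))
    {a b : V} (h : G.Adj a b) : |f a - f b| ≤ 1 := by
  simpa [dist_eq_one_iff_adj.2 h] using hlip a b

open Classical in
lemma sum_eq_add_sum_filter_adj_ne [Fintype V] (u u₀ : V) (g : V → ℝ)
    (hg : ∀ z, ¬ G.Adj u z → g z = 0) :
    ∑ z, g z = g u₀ + ∑ z ∈ univ.filter (fun z => G.Adj u z ∧ z ≠ u₀), g z := by
  rw [← sum_insert (by simp)]
  refine (sum_subset (subset_univ _) fun z _ hz => ?_).symm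
  exact hg z fun h => hz (mem_insert.2 <| or_iff_not_imp_left.2 fun hne => by simp [h, hne])

end SimpleGraph

open Classical in
theorem stmt_17_general {V : Type*} [Fintype V]
    (me : V → V → ℝ) (hnn : ∀ a b, 0 ≤ me a b)
    (m : V → ℝ)
    (G : SimpleGraph V) (hG : ∀ a b, G.Adj a b ↔ 0 < me a b)
    (v w : V)
    (ρ : V → V → ℝ) (hρ : ∀ a b, 0 ≤ ρ a b)
    (f : V → ℝ)
    (hlip : ∀ a b, |f a - f b| ≤ (G.dist a b : ℝ))
    (hfvw : f w - f v = 1) :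
    let Q : V → V → ℝ := fun a b => me a b / m a
    let Δ : (V → ℝ) → V → ℝ := fun g u => ∑ u', Q u u' * (g u' - g u)
    let Nvw : Finset V := Finset.univ.filter fun v' => G.Adj v v' ∧ v' ≠ w
    let Nwv : Finset V := Finset.univ.filter fun w' => G.Adj w w' ∧ w' ≠ v
    let A : V → ℝ := fun v' => Q v v' - ∑ w' ∈ Nwv, ρ v' w'
    let B : V → ℝ := fun w' => Q w w' - ∑ v' ∈ Nvw, ρ v' w'
    Q v w + Q w v - (∑ v' ∈ Nvw, |A v'|) - (∑ w' ∈ Nwv, |B w'|)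
        + ∑ v' ∈ Nvw, ∑ w' ∈ Nwv, ρ v' w' * (1 - (G.dist v' w' : ℝ))
      ≤ Δ f v - Δ f w := by
  intro Q Δ Nvw Nwv A B
  have hQ : ∀ u z, ¬ G.Adj u z → Q u z * (f z - f u) = 0 := fun u z h => by
    simp [Q, le_antisymm (not_lt.1 (mt (hG u z).2 h)) (hnn u z)]
  have hv : Δ f v = Q v w * (f w - f v) + ∑ v' ∈ Nvw, Q v v' * (f v' - f v) :=
    G.sum_eq_add_sum_filter_adj_ne v w _ (hQ v)
  have hw : Δ f w = Q w v * (f v - f w) + ∑ w' ∈ Nwv, Q w w' * (f w' - f w) :=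
    G.sum_eq_add_sum_filter_adj_ne w v _ (hQ w)
  have hplan := transport_cost_le_sum_mul_sub_sum_mul Nvw Nwv (Q v) (Q w) ρ
    (fun v' w' => 1 - (G.dist v' w' : ℝ)) (fun v' => f v' - f v) (fun w' => f w' - f w) hρ
    (fun v' hv' => G.abs_sub_le_one_of_adj hlip (mem_filter.1 hv').2.1.symm)
    (fun w' hw' => G.abs_sub_le_one_of_adj hlip (mem_filter.1 hw').2.1.symm)
    (fun v' _ w' _ => by linarith [neg_abs_le (f v' - f w'), hlip v' w'])
  rw [hv, hw, hfvw, show f v - f w = -1 by linarith]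
  linarith

open Classical in
/-- One direction of the penalty-term transport-plan characterization of
Ollivier curvature of an edge `(v,w)` of a weighted graph: for every nonnegative
`ρ : N(v,w) × N(w,v) → [0,∞)` and every 1-Lipschitz `f` (for the combinatorial graph
distance) with `f(w) − f(v) = 1`,
`Δf(v) − Δf(w) ≥ Q(v,w) + Q(w,v) − ∑|A_ρ| − ∑|B_ρ| + ∑ ρ(v',w')(1 − d(v',w'))`. -/
theorem stmt_17 {V : Type*} [Fintype V]
    (me : V → V → ℝ) (hsym : ∀ a b, me a b = me b a) (hnn : ∀ a b, 0 ≤ me a b)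
    (hdiag : ∀ a, me a a = 0)
    (m : V → ℝ) (hm : ∀ a, 0 < m a)
    (G : SimpleGraph V) (hG : ∀ a b, G.Adj a b ↔ 0 < me a b)
    (hconn : G.Connected)
    (v w : V) (hadj : G.Adj v w)
    (ρ : V → V → ℝ) (hρ : ∀ a b, 0 ≤ ρ a b)
    (f : V → ℝ)
    (hlip : ∀ a b, |f a - f b| ≤ (G.dist a b : ℝ))
    (hfvw : f w - f v = 1) :
    let Q : V → V → ℝ := fun a b => me a b / m a
    let Δ : (V → ℝ) → V → ℝ := fun g u => ∑ u', Q u u' * (g u' - g u)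
    let Nvw : Finset V := Finset.univ.filter fun v' => G.Adj v v' ∧ v' ≠ w
    let Nwv : Finset V := Finset.univ.filter fun w' => G.Adj w w' ∧ w' ≠ v
    let A : V → ℝ := fun v' => Q v v' - ∑ w' ∈ Nwv, ρ v' w'
    let B : V → ℝ := fun w' => Q w w' - ∑ v' ∈ Nvw, ρ v' w'
    Q v w + Q w v - (∑ v' ∈ Nvw, |A v'|) - (∑ w' ∈ Nwv, |B w'|)
        + ∑ v' ∈ Nvw, ∑ w' ∈ Nwv, ρ v' w' * (1 - (G.dist v' w' : ℝ))
      ≤ Δ f v - Δ f w :=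
  stmt_17_general me hnn m G hG v w ρ hρ f hlip hfvw
end
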